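/- Let P be a Markov transition kernel on (X,B), μ a probability measure on (X,B), θ ∈ [0,1), and define the transition kernel Q(x,·) = θ P(x,·) + (1−θ) μ(·). Then the probability measure π_Q(A) = (1−θ) Σ_{i=0}^∞ θ^i (μP^i)(A) is well defined and is an invariant distribution for Q, i.e. ∫ π_Q(dx) Q(x,A) = π_Q(A) for all A ∈ B. -/

import Mathlib

/-! With `a = θ`, `b = 1 - θ` and `νᵢ = μPⁱ`, we have `π_Q = b • ∑ aⁱ • νᵢ`, whose mass is
`b (1 - a)⁻¹ = 1`. As `π_Q` has mass one, `π_Q Q = a • π_Q P + b • μ`, and `π_Q P = b • ∑ aⁱ • νᵢ₊₁`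
because `νᵢ P = νᵢ₊₁`; splitting off the term `ν₀ = μ` of the geometric series then gives back `π_Q`. -/

open MeasureTheory Filter
open scoped ENNReal

namespace MixtureKernelInvariant

variable {X : Type*} [MeasurableSpace X]

/-- `iter P n` is the `n`-step transition kernel `P^n`. -/
noncomputable def iter (P : X → Measure X) : ℕ → X → Measure X
  | 0 => fun x => Measure.dirac x
  | n + 1 => fun x => (iter P n x).bind P

/-- The mixture kernel `Q(x,·) = θ P(x,·) + (1−θ) μ(·)`. -/
noncomputable def mixK (P : X → Measure X) (μ : Measure X) (θ : ℝ) : X → Measure X :=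
  fun x => ENNReal.ofReal θ • P x + ENNReal.ofReal (1 - θ) • μ

/-- The measure `π_Q = (1−θ) Σ_{i=0}^∞ θ^i μP^i`. -/
noncomputable def piQ (P : X → Measure X) (μ : Measure X) (θ : ℝ) : Measure X :=
  ENNReal.ofReal (1 - θ) •
    Measure.sum (fun i : ℕ => ENNReal.ofReal θ ^ i • μ.bind (iter P i))

lemma measurable_iter {P : X → Measure X} (hP : Measurable P) : ∀ n, Measurable (iter P n)
  | 0 => Measure.measurable_dirac
  | n + 1 => (Measure.measurable_bind' hP).comp (measurable_iter hP n)

lemma isProbabilityMeasure_iter {P : X → Measure X} (hP : Measurable P)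
    (hPprob : ∀ x, IsProbabilityMeasure (P x)) : ∀ n x, IsProbabilityMeasure (iter P n x)
  | 0, _ => Measure.dirac.isProbabilityMeasure
  | n + 1, x =>
    haveI := isProbabilityMeasure_iter hP hPprob n x
    isProbabilityMeasure_bind hP.aemeasurable (.of_forall hPprob)

lemma bind_iter_zero (P : X → Measure X) (μ : Measure X) : μ.bind (iter P 0) = μ :=
  Measure.bind_dirac

lemma bind_iter_succ {P : X → Measure X} (hP : Measurable P) (μ : Measure X) (n : ℕ) :
    μ.bind (iter P (n + 1)) = (μ.bind (iter P n)).bind P :=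
  (Measure.bind_bind (measurable_iter hP n).aemeasurable hP.aemeasurable).symm

lemma measurable_mixK {P : X → Measure X} (hP : Measurable P) (μ : Measure X) (θ : ℝ) :
    Measurable (mixK P μ θ) :=
  Measure.measurable_of_measurable_coe _ fun s hs => by
    simp only [mixK, Measure.add_apply, Measure.smul_apply, smul_eq_mul]
    exact (((Measure.measurable_coe hs).comp hP).const_mul _).add measurable_const

lemma bind_mixK {P : X → Measure X} (hP : Measurable P) (μ ν : Measure X) (θ : ℝ) :
    ν.bind (mixK P μ θ) =
      ENNReal.ofReal θ • ν.bind P + (ENNReal.ofReal (1 - θ) * ν Set.univ) • μ := by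
  ext s hs
  have hPs : Measurable fun x => P x s := (Measure.measurable_coe hs).comp hP
  rw [Measure.bind_apply hs (measurable_mixK hP μ θ).aemeasurable]
  simp only [mixK, Measure.add_apply, Measure.smul_apply, smul_eq_mul,
    Measure.bind_apply hs hP.aemeasurable]
  rw [lintegral_add_left (hPs.const_mul _), lintegral_const_mul _ hPs, lintegral_const]
  ring

lemma sum_pow_smul_eq_add_smul_sum_succ (a : ℝ≥0∞) (ν : ℕ → Measure X) :
    Measure.sum (fun i => a ^ i • ν i) = ν 0 + a • Measure.sum (fun i => a ^ i • ν (i + 1)) := by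
  ext s hs
  simp only [Measure.add_apply, Measure.smul_apply, Measure.sum_apply _ hs, smul_eq_mul]
  rw [tsum_eq_zero_add' ENNReal.summable, ← ENNReal.tsum_mul_left]
  simp only [pow_zero, one_mul, pow_succ', mul_assoc]

lemma piQ_bind {P : X → Measure X} (hP : Measurable P) (μ : Measure X) (θ : ℝ) :
    (piQ P μ θ).bind P = ENNReal.ofReal (1 - θ) •
      Measure.sum (fun i : ℕ => ENNReal.ofReal θ ^ i • μ.bind (iter P (i + 1))) := by
  simp only [piQ, Measure.bind_smul, bind_iter_succ hP]
  rw [Measure.bind_sum _ _ hP.aemeasurable]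
  simp only [Measure.bind_smul]

lemma isProbabilityMeasure_piQ {P : X → Measure X} (hP : Measurable P)
    (hPprob : ∀ x, IsProbabilityMeasure (P x)) (μ : Measure X) [IsProbabilityMeasure μ]
    {θ : ℝ} (hθ0 : 0 ≤ θ) (hθ1 : θ < 1) : IsProbabilityMeasure (piQ P μ θ) := by
  have hbind (i : ℕ) : IsProbabilityMeasure (μ.bind (iter P i)) :=
    isProbabilityMeasure_bind (measurable_iter hP i).aemeasurable
      (.of_forall (isProbabilityMeasure_iter hP hPprob i))
  have hb : ENNReal.ofReal (1 - θ) = 1 - ENNReal.ofReal θ := by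
    rw [ENNReal.ofReal_sub _ hθ0, ENNReal.ofReal_one]
  constructor
  simp only [piQ, Measure.smul_apply, Measure.sum_apply _ MeasurableSet.univ, smul_eq_mul,
    measure_univ, mul_one]
  rw [ENNReal.tsum_geometric, hb, ENNReal.mul_inv_cancel] <;> simp [hθ1, ← hb]

/-- Let `P` be a Markov transition kernel, `μ` a probability measure,
`θ ∈ [0,1)`, and `Q(x,·) = θ P(x,·) + (1−θ) μ(·)`.  Then the probability measure
`π_Q = (1−θ) Σ_{i=0}^∞ θ^i (μP^i)` is well defined and is an invariant distribution for `Q`,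
i.e. `∫ π_Q(dx) Q(x,A) = π_Q(A)` for all `A ∈ B`. -/
theorem piQ_isProbability_and_invariant
    (P : X → Measure X) (hPmeas : Measurable P)
    (hPprob : ∀ x, IsProbabilityMeasure (P x))
    (μ : Measure X) (hμ : IsProbabilityMeasure μ)
    (θ : ℝ) (hθ0 : 0 ≤ θ) (hθ1 : θ < 1) :
    IsProbabilityMeasure (piQ P μ θ) ∧
      (piQ P μ θ).bind (mixK P μ θ) = piQ P μ θ := by
  have hπ := isProbabilityMeasure_piQ hPmeas hPprob μ hθ0 hθ1
  refine ⟨hπ, ?_⟩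
  calc (piQ P μ θ).bind (mixK P μ θ)
      = ENNReal.ofReal (1 - θ) • (μ + ENNReal.ofReal θ •
          Measure.sum (fun i : ℕ => ENNReal.ofReal θ ^ i • μ.bind (iter P (i + 1)))) := by
        rw [bind_mixK hPmeas, piQ_bind hPmeas, measure_univ, mul_one, smul_comm, smul_add,
          add_comm]
    _ = piQ P μ θ := by
        rw [piQ, sum_pow_smul_eq_add_smul_sum_succ _ fun i => μ.bind (iter P i), bind_iter_zero]

end MixtureKernelInvariant
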